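/- arXiv:1304.2001 — 2 statements merged into one kernel-verified Lean document; each statement's English description precedes it below -/
import Mathlib

section
/- Assume conditions (A2) and (A3). Then the function G(λ) = ∫₀^∞ F(v_s(λ)) ds is finite for every λ ≥ 0, differentiable on (0,∞), and G′(λ) = F(λ)/ψ(λ) for every λ > 0. -/
/-!
For fixed `λ > 0` the map `T x = ∫_x^λ dz/ψ(z)` is strictly decreasing on `(0, λ]` (by (A3),
`ψ > 0` on `(0, ∞)`), and `t ↦ v_t(λ)` is its inverse, so `T` maps `(0, λ]` onto `[0, ∞)`.
The change of variables `s = T z` turns `G(λ) = ∫_0^∞ F(v_s(λ)) ds` into `∫_0^λ F(z)/ψ(z) dz`,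
which is finite by (A2); the fundamental theorem of calculus then gives `G' = F/ψ`.
-/

open MeasureTheory Real Set Filter

/-- The (sub)-critical branching mechanism
`ψ(z) = b z + σ z² + ∫₀^∞ (e^{−z u} − 1 + z u) m(du)`. -/
noncomputable def psi (b σ : ℝ) (m : Measure ℝ) (z : ℝ) : ℝ :=
  b * z + σ * z ^ 2 + ∫ u in Ioi (0 : ℝ), (Real.exp (-(z * u)) - 1 + z * u) ∂m

/-- Condition (A3): either `σ > 0` or `∫₀^1 u m(du) = ∞`. -/
def condA3 (σ : ℝ) (m : Measure ℝ) : Prop :=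
  0 < σ ∨ ∫⁻ u in Ioc (0 : ℝ) 1, ENNReal.ofReal u ∂m = ⊤

/-- `v t λ ∈ (0, λ]` is the unique solution of `∫_{v_t(λ)}^{λ} dz/ψ(z) = t`
(the cumulant semigroup). -/
def IsCumulant (b σ : ℝ) (m : Measure ℝ) (v : ℝ → ℝ → ℝ) : Prop :=
  ∀ lam > (0 : ℝ), ∀ t ≥ (0 : ℝ),
    v t lam ∈ Ioc 0 lam ∧ ∫ z in (v t lam)..lam, (psi b σ m z)⁻¹ = t

/-- The immigration mechanism `F(z) = β z + ∫₀^∞ (1 − e^{−z u}) n(du)`. -/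
noncomputable def Fim (β : ℝ) (n : Measure ℝ) (z : ℝ) : ℝ :=
  β * z + ∫ u in Ioi (0 : ℝ), (1 - Real.exp (-(z * u))) ∂n

/-- Condition (A2): `∫₀^λ F(z)/ψ(z) dz < ∞` for some `λ > 0`. -/
def condA2 (b σ β : ℝ) (m n : Measure ℝ) : Prop :=
  ∃ lam > (0 : ℝ), IntegrableOn (fun z => Fim β n z / psi b σ m z) (Ioo 0 lam)

lemma exp_neg_sub_one_add_nonneg (x : ℝ) : 0 ≤ exp (-x) - 1 + x := by
  linarith [add_one_le_exp (-x)]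

lemma exp_neg_sub_one_add_le_min {x : ℝ} (hx : 0 ≤ x) : exp (-x) - 1 + x ≤ min x (x ^ 2) := by
  have hexp : exp (-x) ≤ 1 := exp_le_one_iff.2 (by linarith)
  refine le_min (by linarith) ?_
  rcases le_or_gt x 1 with hx1 | hx1
  · have h := abs_exp_sub_one_sub_id_le (x := -x) (by rwa [abs_neg, abs_of_nonneg hx])
    rw [neg_sq] at h
    linarith [le_abs_self (exp (-x) - 1 - -x)]
  · nlinarith

lemma one_sub_exp_neg_le_min (x : ℝ) : 1 - exp (-x) ≤ min 1 x :=
  le_min (by linarith [exp_pos (-x)]) (by linarith [one_sub_le_exp_neg x])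

lemma psi_integrand_le {R z u : ℝ} (hz : z ∈ Icc 0 R) (hu : 0 ≤ u) :
    ‖exp (-(z * u)) - 1 + z * u‖ ≤ (R + R ^ 2) * min u (u ^ 2) := by
  obtain ⟨hz0, hzR⟩ := hz
  have hzu := exp_neg_sub_one_add_le_min (mul_nonneg hz0 hu)
  rw [norm_of_nonneg (exp_neg_sub_one_add_nonneg _)]
  rcases le_or_gt 1 u with hu1 | hu1
  · rw [min_eq_left (by nlinarith : u ≤ u ^ 2)]
    nlinarith [min_le_left (z * u) ((z * u) ^ 2), mul_le_mul_of_nonneg_right hzR hu]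
  · rw [min_eq_right (by nlinarith : u ^ 2 ≤ u)]
    have hz2 : z ^ 2 ≤ R ^ 2 := pow_le_pow_left₀ hz0 hzR 2
    nlinarith [min_le_right (z * u) ((z * u) ^ 2), mul_le_mul_of_nonneg_right hz2 (sq_nonneg u)]

lemma Fim_integrand_le {R z u : ℝ} (hz : z ∈ Icc 0 R) (hu : 0 ≤ u) :
    ‖1 - exp (-(z * u))‖ ≤ (R + 1) * min 1 u := by
  obtain ⟨hz0, hzR⟩ := hz
  have hzu := one_sub_exp_neg_le_min (z * u)
  rw [norm_of_nonneg (by linarith [exp_le_one_iff.2 (neg_nonpos.2 (mul_nonneg hz0 hu))])]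
  rcases le_or_gt 1 u with hu1 | hu1
  · rw [min_eq_left hu1]
    linarith [min_le_left 1 (z * u)]
  · rw [min_eq_right hu1.le]
    nlinarith [min_le_right 1 (z * u), mul_le_mul_of_nonneg_right hzR hu]

lemma continuousOn_setIntegral_Ioi_of_dominated {μ : Measure ℝ} {k : ℝ → ℝ → ℝ} {φ : ℝ → ℝ}
    (hk : Continuous (Function.uncurry k)) (hφ : IntegrableOn φ (Ioi 0) μ)
    (hbound : ∀ R, ∃ C, ∀ z ∈ Icc 0 R, ∀ u ∈ Ioi (0 : ℝ), ‖k z u‖ ≤ C * φ u) :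
    ContinuousOn (fun z => ∫ u in Ioi 0, k z u ∂μ) (Ioi 0) := by
  intro z₀ hz₀
  obtain ⟨C, hC⟩ := hbound (z₀ + 1)
  have hIcc : ContinuousOn (fun z => ∫ u in Ioi 0, k z u ∂μ) (Icc 0 (z₀ + 1)) :=
    continuousOn_of_dominated (fun z _ => (hk.uncurry_left z).aestronglyMeasurable)
      (fun z hz => (ae_restrict_iff' measurableSet_Ioi).2 (ae_of_all _ (hC z hz)))
      (hφ.const_mul C) (ae_of_all _ fun u => (hk.uncurry_right u).continuousOn)
  exact (hIcc.continuousAt (Icc_mem_nhds hz₀ (lt_add_one z₀))).continuousWithinAt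

section BranchingMechanism

variable {b σ β : ℝ} {m n : Measure ℝ}

lemma continuousOn_psi (hm : IntegrableOn (fun u => min u (u ^ 2)) (Ioi 0) m) :
    ContinuousOn (psi b σ m) (Ioi 0) := by
  refine ContinuousOn.add (by fun_prop) (continuousOn_setIntegral_Ioi_of_dominated
    (by fun_prop) hm fun R => ⟨R + R ^ 2, fun z hz u hu => psi_integrand_le hz hu.le⟩)

lemma continuousOn_Fim (hn : IntegrableOn (fun u => min 1 u) (Ioi 0) n) :
    ContinuousOn (Fim β n) (Ioi 0) := by
  refine ContinuousOn.add (by fun_prop) (continuousOn_setIntegral_Ioi_of_dominated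
    (by fun_prop) hn fun R => ⟨R + 1, fun z hz u hu => Fim_integrand_le hz hu.le⟩)

lemma integrableOn_psi_integrand (hm : IntegrableOn (fun u => min u (u ^ 2)) (Ioi 0) m)
    {z : ℝ} (hz : 0 ≤ z) : IntegrableOn (fun u => exp (-(z * u)) - 1 + z * u) (Ioi 0) m :=
  (hm.const_mul (z + z ^ 2)).mono' (Continuous.aestronglyMeasurable (by fun_prop))
    ((ae_restrict_iff' measurableSet_Ioi).2
      (ae_of_all _ fun _ hu => psi_integrand_le ⟨hz, le_rfl⟩ (le_of_lt hu)))

lemma Fim_zero : Fim β n 0 = 0 := by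
  simp [Fim]

lemma psi_pos (hb : 0 ≤ b) (hσ : 0 ≤ σ)
    (hm : IntegrableOn (fun u => min u (u ^ 2)) (Ioi 0) m)
    (hA3 : condA3 σ m) {z : ℝ} (hz : 0 < z) : 0 < psi b σ m z := by
  have hnonneg : 0 ≤ᵐ[m.restrict (Ioi 0)] fun u => exp (-(z * u)) - 1 + z * u :=
    ae_of_all _ fun u => exp_neg_sub_one_add_nonneg (z * u)
  have hint : 0 ≤ ∫ u in Ioi (0 : ℝ), (exp (-(z * u)) - 1 + z * u) ∂m :=
    integral_nonneg_of_ae hnonneg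
  have hbz : 0 ≤ b * z := mul_nonneg hb hz.le
  rcases hA3 with hσ' | hm_inf
  · have : 0 < σ * z ^ 2 := by positivity
    unfold psi; linarith
  · have hm_pos : m (Ioc 0 1) ≠ 0 := fun h0 => by
      simp [setLIntegral_measure_zero _ _ h0] at hm_inf
    -- the integrand vanishes only at `u = 0`, while `∫₀¹ u m(du) = ∞` forces `m (0, 1] > 0`
    have hint_pos : 0 < ∫ u in Ioi (0 : ℝ), (exp (-(z * u)) - 1 + z * u) ∂m := by
      rw [setIntegral_pos_iff_support_of_nonneg_ae hnonneg (integrableOn_psi_integrand hm hz.le)]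
      refine (pos_iff_ne_zero.2 hm_pos).trans_le (measure_mono fun u hu => ⟨?_, hu.1⟩)
      have := one_sub_lt_exp_neg (mul_pos hz hu.1).ne'
      simp only [Function.mem_support]
      linarith
    have : 0 ≤ σ * z ^ 2 := by positivity
    unfold psi; linarith

end BranchingMechanism

section InversePrimitive

variable {g : ℝ → ℝ} {lam : ℝ}

lemma strictAntiOn_integral_left (hg : ContinuousOn g (Ioi 0)) (hpos : ∀ z ∈ Ioi (0 : ℝ), 0 < g z)
    (hlam : 0 < lam) : StrictAntiOn (fun x => ∫ z in x..lam, g z) (Ioi 0) := by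
  have hii : ∀ {x y : ℝ}, 0 < x → 0 < y → IntervalIntegrable g volume x y := fun hx hy =>
    (hg.mono fun w hw => (lt_min hx hy).trans_le hw.1).intervalIntegrable
  intro x hx y hy hxy
  have hsplit := intervalIntegral.integral_add_adjacent_intervals (hii hx hy) (hii hy hlam)
  have hxy_pos : 0 < ∫ z in x..y, g z :=
    intervalIntegral.intervalIntegral_pos_of_pos_on (hii hx hy)
      (fun w hw => hpos w (lt_trans hx hw.1)) hxy
  simp only
  linarith

lemma integral_left_nonneg (hg : ContinuousOn g (Ioi 0)) (hpos : ∀ z ∈ Ioi (0 : ℝ), 0 < g z)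
    {x : ℝ} (hx : x ∈ Ioc 0 lam) : 0 ≤ ∫ z in x..lam, g z := by
  have hlam := hx.1.trans_le hx.2
  simpa using (strictAntiOn_integral_left hg hpos hlam).antitoneOn hx.1 hlam hx.2

lemma injOn_integral_left_Ioc (hg : ContinuousOn g (Ioi 0)) (hpos : ∀ z ∈ Ioi (0 : ℝ), 0 < g z) :
    InjOn (fun x => ∫ z in x..lam, g z) (Ioc 0 lam) := fun _ hx _ hy =>
  (strictAntiOn_integral_left hg hpos (hx.1.trans_le hx.2)).injOn hx.1 hy.1

lemma integral_left_comp_eq (hg : ContinuousOn g (Ioi 0)) (hpos : ∀ z ∈ Ioi (0 : ℝ), 0 < g z)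
    {w : ℝ → ℝ} (hw : ∀ t ≥ (0 : ℝ), w t ∈ Ioc 0 lam ∧ ∫ z in (w t)..lam, g z = t)
    {x : ℝ} (hx : x ∈ Ioc 0 lam) : w (∫ z in x..lam, g z) = x := by
  have hT := hw _ (integral_left_nonneg hg hpos hx)
  exact injOn_integral_left_Ioc hg hpos hT.1 hx hT.2

lemma image_integral_left_Ioc (hg : ContinuousOn g (Ioi 0)) (hpos : ∀ z ∈ Ioi (0 : ℝ), 0 < g z)
    {w : ℝ → ℝ} (hw : ∀ t ≥ (0 : ℝ), w t ∈ Ioc 0 lam ∧ ∫ z in (w t)..lam, g z = t) :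
    (fun x => ∫ z in x..lam, g z) '' Ioc 0 lam = Ici 0 := by
  refine Subset.antisymm ?_ fun t ht => ⟨w t, (hw t ht).1, (hw t ht).2⟩
  rintro _ ⟨x, hx, rfl⟩
  exact integral_left_nonneg hg hpos hx

lemma hasDerivAt_integral_left (hg : ContinuousOn g (Ioi 0)) {x : ℝ} (hx : 0 < x)
    (hlam : 0 < lam) : HasDerivAt (fun x => ∫ z in x..lam, g z) (-g x) x :=
  intervalIntegral.integral_hasDerivAt_left
    (hg.mono fun _ hy => (lt_min hx hlam).trans_le hy.1).intervalIntegrable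
    (hg.stronglyMeasurableAtFilter isOpen_Ioi x hx) (hg.continuousAt (Ioi_mem_nhds hx))

variable {E : Type*} [NormedAddCommGroup E] [NormedSpace ℝ E]

lemma abs_deriv_smul_comp_integral_left_eqOn (hg : ContinuousOn g (Ioi 0))
    (hpos : ∀ z ∈ Ioi (0 : ℝ), 0 < g z)
    {w : ℝ → ℝ} (hw : ∀ t ≥ (0 : ℝ), w t ∈ Ioc 0 lam ∧ ∫ z in (w t)..lam, g z = t) (f : ℝ → E) :
    EqOn (fun x => |-g x| • f (w (∫ z in x..lam, g z))) (fun z => g z • f z) (Ioc 0 lam) :=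
  fun x hx => by
    simp only [abs_neg, abs_of_pos (hpos x hx.1), integral_left_comp_eq hg hpos hw hx]

theorem integrableOn_comp_inverse_integral_left_iff (hg : ContinuousOn g (Ioi 0))
    (hpos : ∀ z ∈ Ioi (0 : ℝ), 0 < g z)
    {w : ℝ → ℝ} (hw : ∀ t ≥ (0 : ℝ), w t ∈ Ioc 0 lam ∧ ∫ z in (w t)..lam, g z = t) (f : ℝ → E) :
    IntegrableOn (fun s => f (w s)) (Ioi 0) ↔ IntegrableOn (fun z => g z • f z) (Ioc 0 lam) := by
  rw [← integrableOn_Ici_iff_integrableOn_Ioi, ← image_integral_left_Ioc hg hpos hw,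
    integrableOn_image_iff_integrableOn_abs_deriv_smul measurableSet_Ioc
      (fun x hx => (hasDerivAt_integral_left hg hx.1 (hx.1.trans_le hx.2)).hasDerivWithinAt)
      (injOn_integral_left_Ioc hg hpos)]
  exact integrableOn_congr_fun (abs_deriv_smul_comp_integral_left_eqOn hg hpos hw f)
    measurableSet_Ioc

theorem integral_comp_inverse_integral_left (hg : ContinuousOn g (Ioi 0))
    (hpos : ∀ z ∈ Ioi (0 : ℝ), 0 < g z)
    {w : ℝ → ℝ} (hw : ∀ t ≥ (0 : ℝ), w t ∈ Ioc 0 lam ∧ ∫ z in (w t)..lam, g z = t) (f : ℝ → E) :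
    ∫ s in Ioi 0, f (w s) = ∫ z in Ioc 0 lam, g z • f z := by
  rw [← integral_Ici_eq_integral_Ioi, ← image_integral_left_Ioc hg hpos hw,
    integral_image_eq_integral_abs_deriv_smul measurableSet_Ioc
      (fun x hx => (hasDerivAt_integral_left hg hx.1 (hx.1.trans_le hx.2)).hasDerivWithinAt)
      (injOn_integral_left_Ioc hg hpos)]
  exact setIntegral_congr_fun measurableSet_Ioc
    (abs_deriv_smul_comp_integral_left_eqOn hg hpos hw f)

end InversePrimitive

lemma integrableOn_Ioc_of_integrableOn_Ioo {h : ℝ → ℝ} (hc : ContinuousOn h (Ioi 0)) {a : ℝ}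
    (ha : 0 < a) (hi : IntegrableOn h (Ioo 0 a)) (x : ℝ) : IntegrableOn h (Ioc 0 x) := by
  have hIcc : IntegrableOn h (Icc a x) :=
    (hc.mono fun _ hy => ha.trans_le hy.1).integrableOn_Icc
  refine (hi.union hIcc).mono_set fun y hy => ?_
  rcases lt_or_ge y a with hya | hya
  · exact Or.inl ⟨hy.1, hya⟩
  · exact Or.inr ⟨hya, hy.2⟩

section Immigration

variable {b σ β : ℝ} {m n : Measure ℝ}

lemma continuousOn_Fim_div_psi (hb : 0 ≤ b) (hσ : 0 ≤ σ)
    (hm : IntegrableOn (fun u => min u (u ^ 2)) (Ioi 0) m)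
    (hn : IntegrableOn (fun u => min 1 u) (Ioi 0) n) (hA3 : condA3 σ m) :
    ContinuousOn (fun z => Fim β n z / psi b σ m z) (Ioi 0) :=
  (continuousOn_Fim hn).div (continuousOn_psi hm) fun _ hz => (psi_pos hb hσ hm hA3 hz).ne'

lemma condA2.integrableOn_Ioc (hA2 : condA2 b σ β m n) (hb : 0 ≤ b) (hσ : 0 ≤ σ)
    (hm : IntegrableOn (fun u => min u (u ^ 2)) (Ioi 0) m)
    (hn : IntegrableOn (fun u => min 1 u) (Ioi 0) n) (hA3 : condA3 σ m) (x : ℝ) :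
    IntegrableOn (fun z => Fim β n z / psi b σ m z) (Ioc 0 x) :=
  let ⟨_, ha, hi⟩ := hA2
  integrableOn_Ioc_of_integrableOn_Ioo (continuousOn_Fim_div_psi hb hσ hm hn hA3) ha hi x

lemma continuousOn_psi_inv (hb : 0 ≤ b) (hσ : 0 ≤ σ)
    (hm : IntegrableOn (fun u => min u (u ^ 2)) (Ioi 0) m) (hA3 : condA3 σ m) :
    ContinuousOn (fun z => (psi b σ m z)⁻¹) (Ioi 0) :=
  (continuousOn_psi hm).inv₀ fun _ hz => (psi_pos hb hσ hm hA3 hz).ne'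

lemma IsCumulant.integrableOn_Fim_comp_iff {v : ℝ → ℝ → ℝ} (hv : IsCumulant b σ m v)
    (hb : 0 ≤ b) (hσ : 0 ≤ σ) (hm : IntegrableOn (fun u => min u (u ^ 2)) (Ioi 0) m)
    (hA3 : condA3 σ m) {lam : ℝ} (hlam : 0 < lam) :
    IntegrableOn (fun s => Fim β n (v s lam)) (Ioi 0) ↔
      IntegrableOn (fun z => Fim β n z / psi b σ m z) (Ioc 0 lam) := by
  simpa only [smul_eq_mul, inv_mul_eq_div] using
    integrableOn_comp_inverse_integral_left_iff (continuousOn_psi_inv hb hσ hm hA3)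
      (fun _ hz => inv_pos.2 (psi_pos hb hσ hm hA3 hz)) (hv lam hlam) (Fim β n)

lemma IsCumulant.integral_Fim_comp {v : ℝ → ℝ → ℝ} (hv : IsCumulant b σ m v)
    (hb : 0 ≤ b) (hσ : 0 ≤ σ) (hm : IntegrableOn (fun u => min u (u ^ 2)) (Ioi 0) m)
    (hA3 : condA3 σ m) {lam : ℝ} (hlam : 0 < lam) :
    ∫ s in Ioi 0, Fim β n (v s lam) = ∫ z in 0..lam, Fim β n z / psi b σ m z := by
  rw [intervalIntegral.integral_of_le hlam.le]
  simpa only [smul_eq_mul, inv_mul_eq_div] using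
    integral_comp_inverse_integral_left (continuousOn_psi_inv hb hσ hm hA3)
      (fun _ hz => inv_pos.2 (psi_pos hb hσ hm hA3 hz)) (hv lam hlam) (Fim β n)

end Immigration

theorem G_finite_and_deriv_general (b σ β : ℝ) (m n : Measure ℝ)
    (hb : 0 ≤ b) (hσ : 0 ≤ σ)
    (hm : IntegrableOn (fun u => min u (u ^ 2)) (Ioi 0) m)
    (hn : IntegrableOn (fun u => min 1 u) (Ioi 0) n)
    (hA2 : condA2 b σ β m n) (hA3 : condA3 σ m)
    (v : ℝ → ℝ → ℝ) (hv : IsCumulant b σ m v)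
    (hv0 : ∀ t ≥ (0 : ℝ), v t 0 = 0) :
    (∀ lam ≥ (0 : ℝ), IntegrableOn (fun s => Fim β n (v s lam)) (Ioi 0)) ∧
    (∀ lam > (0 : ℝ),
      HasDerivAt (fun x => ∫ s in Ioi (0 : ℝ), Fim β n (v s x))
        (Fim β n lam / psi b σ m lam) lam) := by
  have hcont := continuousOn_Fim_div_psi (β := β) hb hσ hm hn hA3
  have hint := hA2.integrableOn_Ioc hb hσ hm hn hA3
  refine ⟨fun lam hlam => ?_, fun lam hlam => ?_⟩
  · rcases hlam.eq_or_lt with rfl | hlam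
    · refine integrableOn_zero.congr_fun (fun s hs => ?_) measurableSet_Ioi
      simp only [hv0 s (le_of_lt hs), Fim_zero]
    · exact (hv.integrableOn_Fim_comp_iff hb hσ hm hA3 hlam).2 (hint lam)
  · have hFTC := intervalIntegral.integral_hasDerivAt_right
      ((intervalIntegrable_iff_integrableOn_Ioc_of_le hlam.le).2 (hint lam))
      (hcont.stronglyMeasurableAtFilter isOpen_Ioi lam hlam)
      (hcont.continuousAt (Ioi_mem_nhds hlam))
    refine hFTC.congr_of_eventuallyEq ?_
    filter_upwards [Ioi_mem_nhds hlam] with x hx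
    exact hv.integral_Fim_comp hb hσ hm hA3 hx

theorem G_finite_and_deriv (b σ β : ℝ) (m n : Measure ℝ)
    (hb : 0 ≤ b) (hσ : 0 ≤ σ) (hβ : 0 ≤ β)
    (hm : IntegrableOn (fun u => min u (u ^ 2)) (Ioi 0) m)
    (hn : IntegrableOn (fun u => min 1 u) (Ioi 0) n)
    (hA2 : condA2 b σ β m n) (hA3 : condA3 σ m)
    (v : ℝ → ℝ → ℝ) (hv : IsCumulant b σ m v)
    (hv0 : ∀ t ≥ (0 : ℝ), v t 0 = 0) :
    (∀ lam ≥ (0 : ℝ), IntegrableOn (fun s => Fim β n (v s lam)) (Ioi 0)) ∧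
    (∀ lam > (0 : ℝ),
      HasDerivAt (fun x => ∫ s in Ioi (0 : ℝ), Fim β n (v s x))
        (Fim β n lam / psi b σ m lam) lam) :=
  G_finite_and_deriv_general b σ β m n hb hσ hm hn hA2 hA3 v hv hv0
end

section
/- Assume conditions (A1) and (A3), and let F be an immigration mechanism with F(x) > 0 for x > 0. Then the map t ↦ c(t)/F(c(t)) is non-increasing on (0,∞). (Consequently, if F′(0+) < ∞, the conditional expectation E[N^A | A = t] = F′(0+) c(t)/F(c(t)) of the number of oldest families is a non-increasing function of t.) -/
open MeasureTheory Real Set Filter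

/-- Under (A1) and (A3), `c(t) ∈ (0,∞)` is defined by `∫_{c(t)}^∞ dz/ψ(z) = t`. -/
def IsExtinctionRate (b σ : ℝ) (m : Measure ℝ) (c : ℝ → ℝ) : Prop :=
  ∀ t > (0 : ℝ), 0 < c t ∧ ∫ z in Ioi (c t), (psi b σ m z)⁻¹ = t

/-!
Since `ψ ≥ 0` on `[0, ∞)`, the tail integral `∫_x^∞ dz/ψ(z)` decreases in `x`, so `c` is
non-increasing. Each integrand `z ↦ 1 - e^{-zu}` of `F` is concave and vanishes at `0`, so
`z/F(z)` is non-decreasing, and composing it with the non-increasing `c` gives the claim.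
-/

lemma mul_one_sub_exp_neg_le_mul {a b : ℝ} (ha : 0 < a) (hab : a ≤ b) :
    a * (1 - exp (-b)) ≤ b * (1 - exp (-a)) := by
  have hb : 0 < b := ha.trans_le hab
  have hslope := convexOn_exp.secant_mono (mem_univ 0) (mem_univ (-b)) (mem_univ (-a))
    (by linarith) (by linarith) (neg_le_neg hab)
  rw [exp_zero, sub_zero, sub_zero, div_le_iff_of_neg (by linarith)] at hslope
  field_simp at hslope
  linarith

lemma one_sub_exp_neg_mul_le {z u : ℝ} (hu : 0 ≤ u) :
    1 - exp (-(z * u)) ≤ max 1 z * min 1 u := by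
  rcases le_total 1 u with h | h
  · rw [min_eq_left h, mul_one]
    linarith [exp_pos (-(z * u)), le_max_left 1 z]
  · rw [min_eq_right h]
    calc 1 - exp (-(z * u)) ≤ z * u := by linarith [add_one_le_exp (-(z * u))]
      _ ≤ max 1 z * u := mul_le_mul_of_nonneg_right (le_max_right 1 z) hu

lemma integrableOn_one_sub_exp_neg_mul {n : Measure ℝ}
    (hn : IntegrableOn (fun u => min 1 u) (Ioi 0) n) {z : ℝ} (hz : 0 ≤ z) :
    IntegrableOn (fun u => 1 - exp (-(z * u))) (Ioi 0) n := by
  refine (hn.const_mul (max 1 z)).mono' (by fun_prop) ?_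
  filter_upwards [ae_restrict_mem measurableSet_Ioi] with u (hu : 0 < u)
  have hexp : exp (-(z * u)) ≤ 1 := exp_le_one_iff.mpr (by nlinarith)
  rw [Real.norm_of_nonneg (by linarith)]
  exact one_sub_exp_neg_mul_le hu.le

lemma mul_Fim_le_mul_Fim {β : ℝ} {n : Measure ℝ}
    (hn : IntegrableOn (fun u => min 1 u) (Ioi 0) n) {x y : ℝ} (hx : 0 < x) (hxy : x ≤ y) :
    x * Fim β n y ≤ y * Fim β n x := by
  have hy : 0 < y := hx.trans_le hxy
  have hint : x * ∫ u in Ioi (0 : ℝ), (1 - exp (-(y * u))) ∂n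
      ≤ y * ∫ u in Ioi (0 : ℝ), (1 - exp (-(x * u))) ∂n := by
    rw [← integral_const_mul, ← integral_const_mul]
    refine setIntegral_mono_on ((integrableOn_one_sub_exp_neg_mul hn hy.le).const_mul x)
      ((integrableOn_one_sub_exp_neg_mul hn hx.le).const_mul y) measurableSet_Ioi
      fun u (hu : 0 < u) => le_of_mul_le_mul_left ?_ hu
    have := mul_one_sub_exp_neg_le_mul (mul_pos hx hu) (mul_le_mul_of_nonneg_right hxy hu.le)
    linarith
  unfold Fim
  linarith

lemma psi_nonneg {b σ : ℝ} (m : Measure ℝ) (hb : 0 ≤ b) (hσ : 0 ≤ σ) {z : ℝ} (hz : 0 ≤ z) :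
    0 ≤ psi b σ m z := by
  have hint : 0 ≤ ∫ u in Ioi (0 : ℝ), (exp (-(z * u)) - 1 + z * u) ∂m :=
    integral_nonneg fun u => by
      change 0 ≤ exp (-(z * u)) - 1 + z * u
      linarith [add_one_le_exp (-(z * u))]
  unfold psi
  positivity

lemma IsExtinctionRate.antitoneOn {b σ : ℝ} {m : Measure ℝ} {c : ℝ → ℝ}
    (hc : IsExtinctionRate b σ m c) (hb : 0 ≤ b) (hσ : 0 ≤ σ) : AntitoneOn c (Ioi 0) := by
  intro s hs t ht hst
  obtain ⟨hcs, hIs⟩ := hc s hs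
  obtain ⟨-, hIt⟩ := hc t ht
  by_contra! hlt
  have hint : IntegrableOn (fun z => (psi b σ m z)⁻¹) (Ioi (c s)) :=
    .of_integral_ne_zero (by rw [hIs]; exact (mem_Ioi.mp hs).ne')
  have hts : t ≤ s := by
    rw [← hIt, ← hIs]
    refine setIntegral_mono_set hint ?_ (Ioi_subset_Ioi hlt.le).eventuallyLE
    filter_upwards [ae_restrict_mem measurableSet_Ioi] with z (hz : c s < z)
    exact inv_nonneg.mpr (psi_nonneg m hb hσ (hcs.trans hz).le)
  exact hlt.ne (congrArg c (le_antisymm hst hts))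

theorem mean_oldest_families_antitone_general (b σ β : ℝ) (m n : Measure ℝ)
    (hb : 0 ≤ b) (hσ : 0 ≤ σ)
    (hn : IntegrableOn (fun u => min 1 u) (Ioi 0) n)
    (hFpos : ∀ z > (0 : ℝ), 0 < Fim β n z)
    (c : ℝ → ℝ) (hc : IsExtinctionRate b σ m c) :
    AntitoneOn (fun t => c t / Fim β n (c t)) (Ioi 0) := by
  intro s hs t ht hst
  have hcs : 0 < c s := (hc s hs).1
  have hct : 0 < c t := (hc t ht).1
  dsimp only
  rw [div_le_div_iff₀ (hFpos _ hct) (hFpos _ hcs)]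
  exact mul_Fim_le_mul_Fim hn hct (hc.antitoneOn hb hσ hs ht hst)

theorem mean_oldest_families_antitone (b σ β : ℝ) (m n : Measure ℝ)
    (hb : 0 ≤ b) (hσ : 0 ≤ σ) (hβ : 0 ≤ β)
    (hm : IntegrableOn (fun u => min u (u ^ 2)) (Ioi 0) m)
    (hn : IntegrableOn (fun u => min 1 u) (Ioi 0) n)
    (hA1 : IntegrableOn (fun z => (psi b σ m z)⁻¹) (Ioi 1))
    (hA3 : condA3 σ m)
    (hFpos : ∀ z > (0 : ℝ), 0 < Fim β n z)
    (c : ℝ → ℝ) (hc : IsExtinctionRate b σ m c) :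
    AntitoneOn (fun t => c t / Fim β n (c t)) (Ioi 0) :=
  mean_oldest_families_antitone_general b σ β m n hb hσ hn hFpos c hc
end
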